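/- Let (X, δ) be a hyperconvex diversity whose induced metric space (X, d) is bounded. Then every chain (decreasing family totally ordered by inclusion) of nonempty admissible subsets of (X, d) has nonempty intersection, and this intersection is again an admissible subset of (X, d). -/

import Mathlib

/-- A diversity on `X`: a real-valued function on finite subsets of `X` which is
nonnegative, vanishes exactly on sets of cardinality at most one, and satisfies the
triangle inequality `δ(A ∪ C) ≤ δ(A ∪ B) + δ(B ∪ C)` for nonempty `B`. -/
structure Diversity (X : Type*) [DecidableEq X] where
  delta : Finset X → ℝ
  nonneg : ∀ A, 0 ≤ delta A
  eq_zero_iff : ∀ A, delta A = 0 ↔ A.card ≤ 1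
  triangle : ∀ A B C : Finset X, B.Nonempty →
    delta (A ∪ C) ≤ delta (A ∪ B) + delta (B ∪ C)

namespace Diversity

variable {X : Type*} [DecidableEq X]

/-- A diversity is hyperconvex if for every `r : ⟨X⟩ → ℝ` with `r ∅ = 0` such that
`δ(⋃_{A ∈ 𝒜} A) ≤ ∑_{A ∈ 𝒜} r A` for every finite collection `𝒜` of finite subsets
of `X`, there is `z ∈ X` with `δ({z} ∪ Y) ≤ r Y` for all finite `Y ⊆ X`. -/
def Hyperconvex (D : Diversity X) : Prop :=
  ∀ r : Finset X → ℝ, r ∅ = 0 →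
    (∀ 𝒜 : Finset (Finset X), D.delta (𝒜.sup id) ≤ ∑ A ∈ 𝒜, r A) →
    ∃ z : X, ∀ Y : Finset X, D.delta (insert z Y) ≤ r Y

/-- A diversity is bounded if its values are uniformly bounded above. -/
def Bounded (D : Diversity X) : Prop :=
  ∃ M : ℝ, 0 ≤ M ∧ ∀ A : Finset X, D.delta A ≤ M

end Diversity

namespace Diversity

variable {X : Type*} [DecidableEq X]

/-- The closed ball of center `x` and radius `r` of the metric space induced by a
diversity (`d(x, y) = δ {x, y}`). -/
def ball (D : Diversity X) (x : X) (r : ℝ) : Set X :=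
  {y : X | D.delta {x, y} ≤ r}

/-- A subset of `X` is admissible (with respect to the metric induced by the diversity)
if it is an intersection of closed balls. -/
def IsAdmissible (D : Diversity X) (A : Set X) : Prop :=
  ∃ s : Set (X × ℝ), A = ⋂ p ∈ s, D.ball p.1 p.2

end Diversity

/-!
The intersection of the chain is the intersection of all balls containing some member of the
chain, hence admissible. These balls have the finite intersection property: finitely many of
them all contain the smallest of the finitely many (nonempty) members of the chain involved.
A common point of all of them comes from hyperconvexity, applied to the function taking `{x}`
to the infimum of the radii of the balls centred at `x` and any other `Y` to `|Y| * M`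
(`M` a bound on the metric); the required bound on
`δ (⋃ 𝒜)` is the triangle inequality through a common point of the finitely many balls that
the singletons of `𝒜` pick out.
-/

theorem Finset.le_sum_csInf {ι : Type*} (s : Finset ι) (g : ι → Set ℝ)
    (hg : ∀ i ∈ s, (g i).Nonempty) {c : ℝ}
    (h : ∀ t : ι → ℝ, (∀ i ∈ s, t i ∈ g i) → c ≤ ∑ i ∈ s, t i) :
    c ≤ ∑ i ∈ s, sInf (g i) := by
  classical
  induction s using Finset.induction generalizing c with
  | empty => simpa using h 0
  | @insert b s hb ih =>
    rw [Finset.sum_insert hb, ← sub_le_iff_le_add']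
    refine ih (fun i hi => hg i (Finset.mem_insert_of_mem hi)) fun t ht => ?_
    rw [sub_le_comm]
    refine le_csInf (hg b (Finset.mem_insert_self b s)) fun u hu => ?_
    have hne : ∀ i ∈ s, i ≠ b := fun i hi => ne_of_mem_of_not_mem hi hb
    have := h (Function.update t b u) fun i hi => by
      rcases Finset.mem_insert.1 hi with rfl | hi
      · simpa using hu
      · simpa [Function.update_of_ne (hne i hi)] using ht i hi
    rw [Finset.sum_insert hb, Function.update_self,
      Finset.sum_congr rfl fun i hi => Function.update_of_ne (hne i hi) u t] at this
    linarith

theorem Finset.sum_sup_le_sum_sum {α M : Type*} [DecidableEq α] [AddCommMonoid M]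
    [PartialOrder M] [IsOrderedAddMonoid M] (𝒜 : Finset (Finset α)) {f : α → M}
    (hf : ∀ x, 0 ≤ f x) : ∑ y ∈ 𝒜.sup id, f y ≤ ∑ A ∈ 𝒜, ∑ y ∈ A, f y := by
  induction 𝒜 using Finset.induction with
  | empty => simp
  | @insert A 𝒜 hA ih =>
    rw [Finset.sup_insert, Finset.sum_insert hA, id]
    calc ∑ y ∈ A ⊔ 𝒜.sup id, f y
        ≤ ∑ y ∈ A ∪ 𝒜.sup id, f y + ∑ y ∈ A ∩ 𝒜.sup id, f y :=
          le_add_of_nonneg_right (Finset.sum_nonneg fun y _ => hf y)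
      _ = ∑ y ∈ A, f y + ∑ y ∈ 𝒜.sup id, f y := Finset.sum_union_inter
      _ ≤ ∑ y ∈ A, f y + ∑ A ∈ 𝒜, ∑ y ∈ A, f y := add_le_add_right ih _

namespace Diversity

section Radii

variable {X : Type*}

/-- `Y ↦ sInf (radii S M Y)` is the function fed to hyperconvexity. -/
def radii (S : Set (X × ℝ)) (M : ℝ) (Y : Finset X) : Set ℝ :=
  insert (Y.card * M) {ρ | ∃ x, Y = {x} ∧ (x, ρ) ∈ S}

theorem radii_empty (S : Set (X × ℝ)) (M : ℝ) : radii S M ∅ = {0} := by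
  simp [radii, eq_comm (a := ∅)]

theorem csInf_radii_singleton_le {S : Set (X × ℝ)} {M : ℝ} (hM : 0 ≤ M)
    (hS : ∀ p ∈ S, 0 ≤ p.2) {x : X} {ρ : ℝ} (hxρ : (x, ρ) ∈ S) :
    sInf (radii S M {x}) ≤ ρ := by
  refine csInf_le ⟨0, ?_⟩ (Set.mem_insert_of_mem _ ⟨x, rfl, hxρ⟩)
  rintro _ (rfl | ⟨y, -, hy⟩)
  · positivity
  · exact hS _ hy

end Radii

variable {X : Type*} [DecidableEq X] {D : Diversity X}

theorem delta_of_card_le_one {A : Finset X} (hA : A.card ≤ 1) : D.delta A = 0 :=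
  (D.eq_zero_iff A).2 hA

theorem delta_le_delta_insert (a : X) (Y : Finset X) : D.delta Y ≤ D.delta (insert a Y) := by
  have h := D.triangle Y {a} ∅ (Finset.singleton_nonempty a)
  rwa [Finset.union_empty, Finset.union_empty, delta_of_card_le_one (A := {a}) (by simp),
    add_zero, Finset.union_comm, ← Finset.insert_eq] at h

theorem delta_insert_le_sum (a : X) (Y : Finset X) :
    D.delta (insert a Y) ≤ ∑ y ∈ Y, D.delta {a, y} := by
  induction Y using Finset.induction with
  | empty => simp [delta_of_card_le_one]
  | @insert b Y hb ih =>
    have h := D.triangle {b} {a} (insert a Y) (Finset.singleton_nonempty a)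
    rw [Finset.sum_insert hb]
    calc D.delta (insert a (insert b Y))
        = D.delta ({b} ∪ insert a Y) := by rw [Finset.insert_comm, ← Finset.insert_eq]
      _ ≤ D.delta ({b} ∪ {a}) + D.delta ({a} ∪ insert a Y) := h
      _ ≤ D.delta {a, b} + ∑ y ∈ Y, D.delta {a, y} := by
        rw [Finset.union_comm, ← Finset.insert_eq, ← Finset.insert_eq, Finset.insert_idem]
        linarith

theorem delta_sup_le (a : X) (𝒜 : Finset (Finset X)) :
    D.delta (𝒜.sup id) ≤ ∑ A ∈ 𝒜, ∑ y ∈ A, D.delta {a, y} :=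
  calc D.delta (𝒜.sup id)
      ≤ D.delta (insert a (𝒜.sup id)) := delta_le_delta_insert a _
    _ ≤ ∑ y ∈ 𝒜.sup id, D.delta {a, y} := delta_insert_le_sum a _
    _ ≤ ∑ A ∈ 𝒜, ∑ y ∈ A, D.delta {a, y} := Finset.sum_sup_le_sum_sum 𝒜 fun _ => D.nonneg _

theorem Hyperconvex.nonempty (hH : D.Hyperconvex) : Nonempty X := by
  by_contra hX
  rw [not_nonempty_iff] at hX
  obtain ⟨z, -⟩ := hH 0 rfl fun 𝒜 => by
    simpa [Finset.eq_empty_of_isEmpty] using (delta_of_card_le_one (D := D) (A := ∅) (by simp)).le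
  exact hX.false z

variable {S : Set (X × ℝ)} {M : ℝ}

theorem delta_sup_le_sum_of_mem_radii [Nonempty X] (hM : ∀ x y : X, D.delta {x, y} ≤ M)
    (hS : ∀ T : Finset (X × ℝ), ↑T ⊆ S → T.Nonempty → ∃ a, ∀ p ∈ T, a ∈ D.ball p.1 p.2)
    (𝒜 : Finset (Finset X)) (t : Finset X → ℝ) (ht : ∀ A ∈ 𝒜, t A ∈ radii S M A) :
    D.delta (𝒜.sup id) ≤ ∑ A ∈ 𝒜, t A := by
  classical
  set T := ((𝒜.sup id).image fun x => (x, t {x})).filter (· ∈ S)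
  obtain ⟨a, ha⟩ : ∃ a, ∀ p ∈ T, a ∈ D.ball p.1 p.2 := by
    rcases T.eq_empty_or_nonempty with hT | hT
    · exact ⟨Classical.arbitrary X, by simp [hT]⟩
    · exact hS T (fun p hp => (Finset.mem_filter.1 hp).2) hT
  refine (delta_sup_le a 𝒜).trans (Finset.sum_le_sum fun A hA => ?_)
  rcases ht A hA with hA' | ⟨x, rfl, hx⟩
  · rw [hA']
    simpa using Finset.sum_le_card_nsmul A _ M fun y _ => hM a y
  · have hxT : (x, t {x}) ∈ T :=
      Finset.mem_filter.2 ⟨Finset.mem_image_of_mem _ (Finset.mem_sup.2 ⟨{x}, hA, by simp⟩), hx⟩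
    rw [Finset.sum_singleton, Finset.pair_comm]
    exact ha _ hxT

theorem Hyperconvex.exists_forall_mem_ball (hH : D.Hyperconvex)
    (hb : ∃ M : ℝ, ∀ x y : X, D.delta {x, y} ≤ M)
    (hS : ∀ T : Finset (X × ℝ), ↑T ⊆ S → T.Nonempty → ∃ a, ∀ p ∈ T, a ∈ D.ball p.1 p.2) :
    ∃ z, ∀ p ∈ S, z ∈ D.ball p.1 p.2 := by
  have := hH.nonempty
  obtain ⟨M, hM⟩ := hb
  have hM0 : 0 ≤ M := (D.nonneg _).trans (hM (Classical.arbitrary X) (Classical.arbitrary X))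
  have hS0 : ∀ p ∈ S, 0 ≤ p.2 := fun p hp => by
    obtain ⟨a, ha⟩ := hS {p} (by simpa using hp) (Finset.singleton_nonempty p)
    exact (D.nonneg _).trans (ha p (Finset.mem_singleton_self p))
  obtain ⟨z, hz⟩ := hH (fun Y => sInf (radii S M Y)) (by simp [radii_empty]) fun 𝒜 =>
    Finset.le_sum_csInf 𝒜 _ (fun A _ => Set.insert_nonempty _ _)
      (delta_sup_le_sum_of_mem_radii hM hS 𝒜)
  refine ⟨z, fun p hp => ?_⟩
  calc D.delta {p.1, z} = D.delta (insert z {p.1}) := by rw [Finset.pair_comm]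
    _ ≤ sInf (radii S M {p.1}) := hz _
    _ ≤ p.2 := csInf_radii_singleton_le hM0 hS0 hp

def ballsContaining (D : Diversity X) (A : Set X) : Set (X × ℝ) :=
  {p | A ⊆ D.ball p.1 p.2}

theorem ballsContaining_anti : Antitone D.ballsContaining :=
  fun _ _ hAB _ hp => hAB.trans hp

theorem IsAdmissible.eq_biInter_ballsContaining {A : Set X} (hA : D.IsAdmissible A) :
    A = ⋂ p ∈ D.ballsContaining A, D.ball p.1 p.2 := by
  obtain ⟨s, rfl⟩ := hA
  refine subset_antisymm (Set.subset_iInter₂ fun p hp => hp) ?_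
  exact Set.biInter_mono (fun p hp => Set.biInter_subset_of_mem hp) fun _ _ => subset_rfl

theorem sInter_eq_biInter_ballsContaining {C : Set (Set X)} (hC : ∀ A ∈ C, D.IsAdmissible A) :
    ⋂₀ C = ⋂ p ∈ ⋃ A ∈ C, D.ballsContaining A, D.ball p.1 p.2 := by
  rw [Set.sInter_eq_iInter, Set.biUnion_eq_iUnion, Set.biInter_iUnion]
  exact Set.iInter_congr fun A => (hC A A.2).eq_biInter_ballsContaining

theorem exists_forall_mem_ball_of_isChain {C : Set (Set X)} (hchain : IsChain (· ⊆ ·) C)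
    (hne : ∀ A ∈ C, A.Nonempty) {T : Finset (X × ℝ)}
    (hT : ↑T ⊆ ⋃ A ∈ C, D.ballsContaining A) (hTne : T.Nonempty) :
    ∃ a, ∀ p ∈ T, a ∈ D.ball p.1 p.2 := by
  have hCne : C.Nonempty := by
    obtain ⟨p, hp⟩ := hTne
    obtain ⟨A, hA, -⟩ := Set.mem_iUnion₂.1 (hT hp)
    exact ⟨A, hA⟩
  have hdir : DirectedOn (fun A B => D.ballsContaining A ⊆ D.ballsContaining B) C :=
    fun A hA B hB => (hchain.total hA hB).elim
      (fun hAB => ⟨A, hA, subset_rfl, ballsContaining_anti hAB⟩)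
      (fun hBA => ⟨B, hB, ballsContaining_anti hBA, subset_rfl⟩)
  obtain ⟨A, hA, hTA⟩ := hdir.exists_mem_subset_of_finset_subset_biUnion hCne hT
  obtain ⟨a, ha⟩ := hne A hA
  exact ⟨a, fun p hp => hTA hp ha⟩

end Diversity

open Diversity

/-- Let `(X, δ)` be a hyperconvex diversity whose induced metric
space `(X, d)`, `d(x,y) = δ {x,y}`, is bounded. Then every chain (family totally
ordered by inclusion) of nonempty admissible subsets of `(X, d)` has nonempty
intersection, and the intersection is again admissible. -/
theorem chain_of_admissible_nonempty_intersection
    {X : Type*} [DecidableEq X] (D : Diversity X)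
    (hH : D.Hyperconvex)
    (hb : ∃ M : ℝ, ∀ x y : X, D.delta {x, y} ≤ M)
    (C : Set (Set X)) (hchain : IsChain (· ⊆ ·) C)
    (hC : ∀ A ∈ C, A.Nonempty ∧ D.IsAdmissible A) :
    (⋂₀ C).Nonempty ∧ D.IsAdmissible (⋂₀ C) := by
  have hrep := sInter_eq_biInter_ballsContaining fun A hA => (hC A hA).2
  obtain ⟨z, hz⟩ := hH.exists_forall_mem_ball hb fun T hT hTne =>
    exists_forall_mem_ball_of_isChain hchain (fun A hA => (hC A hA).1) hT hTne
  exact ⟨⟨z, hrep ▸ Set.mem_iInter₂.2 hz⟩, _, hrep⟩
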